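/- Let W be an nT × np real matrix and, for γ ∈ ℝ^{np}, write γ = (γ_1',…,γ_n')' with each γ_i ∈ ℝ^p. Consider the MCP-penalized clustering objective Q(γ) = (1/2)‖y − Wγ‖₂² + Σ_{1≤i<j≤n} ρ_MCP(‖γ_i − γ_j‖₂; λ, θ). If θ·λ_min(W'W) ≥ n, then Q is a convex function on ℝ^{np}. (Key facts used: Σ_{1≤i<j≤n}‖γ_i − γ_j‖₂² = n Σ_{i=1}^n ‖γ_i‖₂² − ‖Σ_{i=1}^n γ_i‖₂² ≤ n‖γ‖₂², and v ↦ ρ_MCP(‖v‖₂; λ, θ) + ‖v‖₂²/(2θ) is convex on ℝ^p since it is the composition of a convex nondecreasing function with a norm.) -/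

import Mathlib

open Matrix Set Filter

noncomputable section

/-- Euclidean norm of a vector. -/
def norm2 {α : Type*} [Fintype α] (v : α → ℝ) : ℝ := Real.sqrt (∑ i, v i ^ 2)

/-- Smallest eigenvalue, as the infimum of the Rayleigh quotient over the unit sphere. -/
def lambdaMin {α : Type*} [Fintype α] (A : Matrix α α ℝ) : ℝ :=
  ⨅ v : {v : α → ℝ // norm2 v = 1}, ∑ i, ∑ j, v.1 i * A i j * v.1 j

/-- The minimax concave penalty (MCP) with parameters `λ > 0`, `θ > 0`. -/
def mcp (lam th t : ℝ) : ℝ :=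
  if |t| ≤ th * lam then lam * |t| - t ^ 2 / (2 * th) else th * lam ^ 2 / 2

/-! Split `Q(γ)` as
`[½‖y - Wγ‖² - (1/2θ) Σ_{i<j} ‖γ_i - γ_j‖²] + Σ_{i<j} φ(‖γ_i - γ_j‖)` with
`φ(t) = ρ_MCP(t) + t²/(2θ) = λt + max(t - θλ, 0)²/(2θ)`.
Each `φ(‖γ_i - γ_j‖)` is convex, being a nondecreasing convex function of a seminorm. The bracket
is quadratic in `γ` with second-order part `½‖Wδ‖² - (1/2θ) Σ_{i<j} ‖δ_i - δ_j‖²`, which is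
nonnegative because `Σ_{i<j} ‖δ_i - δ_j‖² ≤ n‖δ‖² ≤ θ λ_min(W'W) ‖δ‖² ≤ θ ‖Wδ‖²`. -/

open Finset

section Norm2

variable {α : Type*} [Fintype α]

lemma norm2_sq (v : α → ℝ) : norm2 v ^ 2 = ∑ i, v i ^ 2 :=
  Real.sq_sqrt (sum_nonneg fun _ _ => sq_nonneg _)

lemma norm2_nonneg (v : α → ℝ) : 0 ≤ norm2 v := Real.sqrt_nonneg _

lemma norm2_eq_norm (v : α → ℝ) : norm2 v = ‖WithLp.toLp 2 v‖ := by
  simp [norm2, EuclideanSpace.norm_eq]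

lemma norm2_eq_zero_iff {v : α → ℝ} : norm2 v = 0 ↔ v = 0 := by
  rw [norm2_eq_norm, norm_eq_zero, WithLp.toLp_eq_zero]

lemma abs_le_norm2 (v : α → ℝ) (i : α) : |v i| ≤ norm2 v :=
  Real.abs_le_sqrt (single_le_sum (fun j _ => sq_nonneg (v j)) (mem_univ i))

lemma norm2_neg (v : α → ℝ) : norm2 (-v) = norm2 v := by
  simp [norm2]

lemma norm2_smul (c : ℝ) (v : α → ℝ) : norm2 (c • v) = |c| * norm2 v := by
  simp only [norm2_eq_norm, WithLp.toLp_smul, norm_smul, Real.norm_eq_abs]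

lemma convexOn_norm2 : ConvexOn ℝ univ (norm2 : (α → ℝ) → ℝ) := by
  rw [show (norm2 : (α → ℝ) → ℝ) = fun v => ‖WithLp.toLp 2 v‖ from funext norm2_eq_norm]
  exact convexOn_univ_norm.comp_linearMap (WithLp.linearEquiv 2 ℝ (α → ℝ)).symm.toLinearMap

lemma norm2_smul_add_smul_sq {a b : ℝ} (hab : a + b = 1) (u v : α → ℝ) :
    norm2 (a • u + b • v) ^ 2 = a * norm2 u ^ 2 + b * norm2 v ^ 2 - a * b * norm2 (u - v) ^ 2 := by
  simp only [norm2_sq, mul_sum, ← sum_add_distrib, ← sum_sub_distrib]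
  refine sum_congr rfl fun i _ => ?_
  simp only [Pi.add_apply, Pi.sub_apply, Pi.smul_apply, smul_eq_mul]
  linear_combination (a * u i ^ 2 + b * v i ^ 2) * hab

end Norm2

section LambdaMin

variable {α : Type*} [Fintype α]

-- Needed for `ciInf_le`: an unbounded infimum would be the junk value `0`.
lemma bddBelow_rayleigh (A : Matrix α α ℝ) :
    BddBelow (range fun u : {u : α → ℝ // norm2 u = 1} => ∑ i, ∑ j, u.1 i * A i j * u.1 j) := by
  refine ⟨-∑ i, ∑ j, |A i j|, ?_⟩
  rintro _ ⟨⟨u, hu⟩, rfl⟩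
  simp only [← sum_neg_distrib]
  refine sum_le_sum fun i _ => sum_le_sum fun j _ => neg_le_of_abs_le ?_
  have hi := abs_le_norm2 u i
  have hj := abs_le_norm2 u j
  rw [hu] at hi hj
  rw [abs_mul, abs_mul]
  calc |u i| * |A i j| * |u j| ≤ 1 * |A i j| * 1 := by gcongr
    _ = |A i j| := by ring

lemma lambdaMin_mul_norm2_sq_le (A : Matrix α α ℝ) (v : α → ℝ) :
    lambdaMin A * norm2 v ^ 2 ≤ ∑ i, ∑ j, v i * A i j * v j := by
  rcases eq_or_ne (norm2 v) 0 with hv | hv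
  · rw [hv]
    simp [norm2_eq_zero_iff.mp hv]
  set s := norm2 v with hs
  have hs_pos : 0 < s := lt_of_le_of_ne (Real.sqrt_nonneg _) hv.symm
  have hunit : norm2 (s⁻¹ • v) = 1 := by
    rw [norm2_smul, abs_inv, abs_of_pos hs_pos, inv_mul_cancel₀ hv]
  have hle : lambdaMin A ≤ ∑ i, ∑ j, (s⁻¹ • v) i * A i j * (s⁻¹ • v) j :=
    ciInf_le (bddBelow_rayleigh A) ⟨s⁻¹ • v, hunit⟩
  have hscale : ∑ i, ∑ j, (s⁻¹ • v) i * A i j * (s⁻¹ • v) j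
      = (s ^ 2)⁻¹ * ∑ i, ∑ j, v i * A i j * v j := by
    simp only [Pi.smul_apply, smul_eq_mul, mul_sum]
    exact sum_congr rfl fun i _ => sum_congr rfl fun j _ => by ring
  calc lambdaMin A * s ^ 2 ≤ (s ^ 2)⁻¹ * (∑ i, ∑ j, v i * A i j * v j) * s ^ 2 := by
        gcongr; exact hle.trans_eq hscale
    _ = ∑ i, ∑ j, v i * A i j * v j := by field_simp

lemma sum_sum_mul_transpose_mul {τ : Type*} [Fintype τ] (W : Matrix τ α ℝ) (v : α → ℝ) :
    ∑ i, ∑ j, v i * (Wᵀ * W) i j * v j = norm2 (W *ᵥ v) ^ 2 := by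
  calc ∑ i, ∑ j, v i * (Wᵀ * W) i j * v j = v ⬝ᵥ (Wᵀ * W) *ᵥ v := by
        simp only [dotProduct, mulVec, mul_sum, mul_assoc]
    _ = (W *ᵥ v) ⬝ᵥ (W *ᵥ v) := by
        rw [← mulVec_mulVec, dotProduct_mulVec, vecMul_transpose]
    _ = norm2 (W *ᵥ v) ^ 2 := by
        rw [norm2_sq]
        simp only [dotProduct, sq]

end LambdaMin

/-- The block difference `γ_i - γ_j` of `γ = (γ_1', …, γ_n')'`. -/
def pairDiff {ι κ : Type*} (i j : ι) : (ι × κ → ℝ) →ₗ[ℝ] κ → ℝ :=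
  LinearMap.pi fun a =>
    LinearMap.proj (R := ℝ) (φ := fun _ : ι × κ => ℝ) (i, a) - LinearMap.proj (j, a)

@[simp]
lemma pairDiff_apply {ι κ : Type*} (i j : ι) (γ : ι × κ → ℝ) (a : κ) :
    pairDiff i j γ a = γ (i, a) - γ (j, a) := rfl

section Pairs

variable {ι κ : Type*} [Fintype ι] [LinearOrder ι]

lemma two_mul_sum_filter_lt_le_sum_sum (g : ι → ι → ℝ) (hsymm : ∀ i j, g i j = g j i)
    (hnonneg : ∀ i j, 0 ≤ g i j) :
    2 * ∑ ij ∈ univ.filter (fun ij : ι × ι => ij.1 < ij.2), g ij.1 ij.2 ≤ ∑ i, ∑ j, g i j := by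
  set P := univ.filter (fun ij : ι × ι => ij.1 < ij.2)
  set P' := univ.filter (fun ij : ι × ι => ij.2 < ij.1)
  have hswap : ∑ ij ∈ P, g ij.1 ij.2 = ∑ ij ∈ P', g ij.1 ij.2 :=
    sum_nbij' Prod.swap Prod.swap (by simp [P, P']) (by simp [P, P']) (by simp) (by simp)
      fun ij _ => hsymm ij.1 ij.2
  have hdisj : Disjoint P P' := disjoint_filter.2 fun _ _ h => lt_asymm h
  calc 2 * ∑ ij ∈ P, g ij.1 ij.2 = ∑ ij ∈ P ∪ P', g ij.1 ij.2 := by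
        rw [sum_union hdisj, hswap, two_mul]
    _ ≤ ∑ ij : ι × ι, g ij.1 ij.2 :=
        sum_le_sum_of_subset_of_nonneg (subset_univ _) fun ij _ _ => hnonneg ij.1 ij.2
    _ = ∑ i, ∑ j, g i j := Fintype.sum_prod_type _

omit [LinearOrder ι] in
lemma sum_sum_sub_sq (x : ι → ℝ) :
    ∑ i, ∑ j, (x i - x j) ^ 2 = 2 * Fintype.card ι * ∑ i, x i ^ 2 - 2 * (∑ i, x i) ^ 2 := by
  simp only [sub_sq, sum_add_distrib, sum_sub_distrib, sum_const, card_univ, nsmul_eq_mul,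
    ← mul_sum, ← sum_mul]
  ring

lemma sum_filter_lt_sub_sq_le (x : ι → ℝ) :
    ∑ ij ∈ univ.filter (fun ij : ι × ι => ij.1 < ij.2), (x ij.1 - x ij.2) ^ 2
      ≤ Fintype.card ι * ∑ i, x i ^ 2 := by
  have h := two_mul_sum_filter_lt_le_sum_sum (fun i j => (x i - x j) ^ 2)
    (fun i j => by ring) (fun _ _ => sq_nonneg _)
  rw [sum_sum_sub_sq] at h
  nlinarith [sq_nonneg (∑ i, x i)]

lemma sum_filter_lt_norm2_pairDiff_sq_le [Fintype κ] (γ : ι × κ → ℝ) :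
    ∑ ij ∈ univ.filter (fun ij : ι × ι => ij.1 < ij.2), norm2 (pairDiff ij.1 ij.2 γ) ^ 2
      ≤ Fintype.card ι * norm2 γ ^ 2 := by
  simp only [norm2_sq, pairDiff_apply]
  rw [sum_comm, Fintype.sum_prod_type_right, mul_sum]
  exact sum_le_sum fun a _ => sum_filter_lt_sub_sq_le fun i => γ (i, a)

end Pairs

lemma sum_filter_lt_norm2_pairDiff_sq_le_mul_norm2_mulVec_sq {ι κ τ : Type*} [Fintype ι]
    [LinearOrder ι] [Fintype κ] [Fintype τ] (W : Matrix τ (ι × κ) ℝ) {th : ℝ} (hth : 0 ≤ th)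
    (hW : (Fintype.card ι : ℝ) ≤ th * lambdaMin (Wᵀ * W)) (δ : ι × κ → ℝ) :
    ∑ ij ∈ univ.filter (fun ij : ι × ι => ij.1 < ij.2), norm2 (pairDiff ij.1 ij.2 δ) ^ 2
      ≤ th * norm2 (W *ᵥ δ) ^ 2 := by
  have hmin := lambdaMin_mul_norm2_sq_le (Wᵀ * W) δ
  rw [sum_sum_mul_transpose_mul] at hmin
  calc _ ≤ Fintype.card ι * norm2 δ ^ 2 := sum_filter_lt_norm2_pairDiff_sq_le δ
    _ ≤ th * lambdaMin (Wᵀ * W) * norm2 δ ^ 2 := by gcongr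
    _ ≤ th * norm2 (W *ᵥ δ) ^ 2 := by
        rw [mul_assoc]
        gcongr

/-- `ρ_MCP(t; λ, θ) + t² / (2θ)` on `t ≥ 0`, in closed form. -/
def mcpConvexified (lam th t : ℝ) : ℝ :=
  lam * t + max (t - th * lam) 0 ^ 2 / (2 * th)

lemma mcp_eq_mcpConvexified_sub {lam th t : ℝ} (hth : 0 < th) (ht : 0 ≤ t) :
    mcp lam th t = mcpConvexified lam th t - t ^ 2 / (2 * th) := by
  unfold mcp mcpConvexified
  rw [abs_of_nonneg ht]
  split_ifs with h
  · rw [max_eq_right (by linarith)]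
    ring
  · rw [max_eq_left (by linarith)]
    field_simp
    ring

lemma convexOn_mcpConvexified {lam th : ℝ} (hth : 0 ≤ th) :
    ConvexOn ℝ univ (mcpConvexified lam th) := by
  have hhinge : ConvexOn ℝ univ fun t : ℝ => max (t - th * lam) 0 :=
    ((convexOn_id convex_univ).add_const (-(th * lam))).sup (convexOn_const 0 convex_univ)
  have hsq := (hhinge.pow (fun t _ => le_max_right _ _) 2).smul
    (inv_nonneg.2 (by positivity : (0 : ℝ) ≤ 2 * th))
  have hlin : ConvexOn ℝ univ fun t : ℝ => lam * t := (LinearMap.mul ℝ ℝ lam).convexOn convex_univ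
  refine (hlin.add hsq).congr fun t _ => ?_
  simp [mcpConvexified, div_eq_inv_mul, sub_eq_add_neg]

lemma monotone_mcpConvexified {lam th : ℝ} (hlam : 0 ≤ lam) (hth : 0 ≤ th) :
    Monotone (mcpConvexified lam th) := by
  intro s t hst
  unfold mcpConvexified
  gcongr

lemma ConvexOn.monotone_comp {E : Type*} [AddCommMonoid E] [Module ℝ E] {f : E → ℝ} {g : ℝ → ℝ}
    (hg : ConvexOn ℝ univ g) (hg_mono : Monotone g) (hf : ConvexOn ℝ univ f) :
    ConvexOn ℝ univ (g ∘ f) :=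
  ⟨convex_univ, fun x _ y _ _ _ ha hb hab =>
    (hg_mono (hf.2 (mem_univ x) (mem_univ y) ha hb hab)).trans
      (hg.2 (mem_univ _) (mem_univ _) ha hb hab)⟩

lemma convexOn_mcpConvexified_norm2_comp {E κ : Type*} [AddCommGroup E] [Module ℝ E] [Fintype κ]
    {lam th : ℝ} (hlam : 0 ≤ lam) (hth : 0 ≤ th) (L : E →ₗ[ℝ] κ → ℝ) :
    ConvexOn ℝ univ fun x => mcpConvexified lam th (norm2 (L x)) :=
  ((convexOn_mcpConvexified hth).monotone_comp (monotone_mcpConvexified hlam hth)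
    convexOn_norm2).comp_linearMap L

lemma ConvexOn.finset_sum {ι E : Type*} [AddCommMonoid E] [Module ℝ E] {s : Set E} (hs : Convex ℝ s)
    (t : Finset ι) {f : ι → E → ℝ} (hf : ∀ i ∈ t, ConvexOn ℝ s (f i)) :
    ConvexOn ℝ s fun x => ∑ i ∈ t, f i x := by
  classical
  induction t using Finset.induction_on with
  | empty => simpa using convexOn_const 0 hs
  | insert i t hi ih =>
    simp_rw [sum_insert hi]
    exact (hf i (mem_insert_self _ _)).add (ih fun j hj => hf j (mem_insert_of_mem hj))

lemma convexOn_univ_of_smul_add_smul_eq {E : Type*} [AddCommGroup E] [Module ℝ E] {f q : E → ℝ}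
    (hq : ∀ x, 0 ≤ q x)
    (hf : ∀ x y (a b : ℝ), a + b = 1 →
      f (a • x + b • y) = a * f x + b * f y - a * b * q (x - y)) :
    ConvexOn ℝ univ f :=
  ⟨convex_univ, fun x _ y _ a b ha hb hab => by
    rw [hf x y a b hab, smul_eq_mul, smul_eq_mul]
    nlinarith [mul_nonneg (mul_nonneg ha hb) (hq (x - y))]⟩

lemma convexOn_half_norm2_sub_mulVec_sq_sub {β τ σ κ : Type*} [Fintype β] [Fintype τ] [Fintype κ]
    (W : Matrix τ β ℝ) (y : τ → ℝ) (s : Finset σ) (L : σ → (β → ℝ) →ₗ[ℝ] κ → ℝ) (c : ℝ)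
    (hL : ∀ δ, c * ∑ k ∈ s, norm2 (L k δ) ^ 2 ≤ 1 / 2 * norm2 (W *ᵥ δ) ^ 2) :
    ConvexOn ℝ univ fun γ => 1 / 2 * norm2 (y - W *ᵥ γ) ^ 2 - c * ∑ k ∈ s, norm2 (L k γ) ^ 2 := by
  refine convexOn_univ_of_smul_add_smul_eq (fun δ => sub_nonneg.2 (hL δ)) fun γ δ a b hab => ?_
  have hres : y - W *ᵥ (a • γ + b • δ) = a • (y - W *ᵥ γ) + b • (y - W *ᵥ δ) := by
    rw [mulVec_add, mulVec_smul, mulVec_smul, smul_sub, smul_sub]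
    nth_rw 1 [← one_smul ℝ y, ← hab, add_smul]
    abel
  have hres_sub : (y - W *ᵥ γ) - (y - W *ᵥ δ) = -(W *ᵥ (γ - δ)) := by
    rw [mulVec_sub]
    abel
  have hpen : ∀ k, norm2 (L k (a • γ + b • δ)) ^ 2
      = a * norm2 (L k γ) ^ 2 + b * norm2 (L k δ) ^ 2 - a * b * norm2 (L k (γ - δ)) ^ 2 := by
    intro k
    rw [map_add, map_smul, map_smul, norm2_smul_add_smul_sq hab, map_sub]
  simp only [hres, norm2_smul_add_smul_sq hab, hres_sub, norm2_neg, hpen, sum_add_distrib,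
    sum_sub_distrib, ← mul_sum]
  ring

theorem mcp_objective_globally_convex_general
    (n T p : ℕ)
    (y : Fin n × Fin T → ℝ)
    (W : Matrix (Fin n × Fin T) (Fin n × Fin p) ℝ)
    (lam th : ℝ) (hlam : 0 < lam) (hth : 0 < th)
    (Q : (Fin n × Fin p → ℝ) → ℝ)
    (hQ : Q = fun γ =>
      (1 / 2) * ∑ it, (y it - W.mulVec γ it) ^ 2 +
        ∑ ij ∈ Finset.univ.filter (fun ij : Fin n × Fin n => ij.1 < ij.2),
          mcp lam th (norm2 (fun a => γ (ij.1, a) - γ (ij.2, a))))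
    (hconv : (n : ℝ) ≤ th * lambdaMin (Wᵀ * W)) :
    ConvexOn ℝ Set.univ Q := by
  set P := univ.filter fun ij : Fin n × Fin n => ij.1 < ij.2
  have hcurv : ∀ δ, 1 / (2 * th) * ∑ ij ∈ P, norm2 (pairDiff ij.1 ij.2 δ) ^ 2
      ≤ 1 / 2 * norm2 (W *ᵥ δ) ^ 2 := fun δ => by
    have h := sum_filter_lt_norm2_pairDiff_sq_le_mul_norm2_mulVec_sq W hth.le
      (by rwa [Fintype.card_fin]) δ
    rw [one_div_mul_eq_div, div_le_iff₀ (by positivity)]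
    linarith
  have hquad := convexOn_half_norm2_sub_mulVec_sq_sub W y P (fun ij => pairDiff ij.1 ij.2) _ hcurv
  have hpen := ConvexOn.finset_sum convex_univ P fun ij _ =>
    convexOn_mcpConvexified_norm2_comp hlam.le hth.le (pairDiff (κ := Fin p) ij.1 ij.2)
  refine (hquad.add hpen).congr fun γ _ => ?_
  have hpairDiff : ∀ ij : Fin n × Fin n,
      (fun a => γ (ij.1, a) - γ (ij.2, a)) = pairDiff ij.1 ij.2 γ := fun _ => rfl
  simp only [hQ, Pi.add_apply, hpairDiff, mcp_eq_mcpConvexified_sub hth (norm2_nonneg _),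
    sum_sub_distrib, ← sum_div, norm2_sq (y - W *ᵥ γ), Pi.sub_apply]
  ring

/-- if `θ·λ_min(W'W) ≥ n`, then the MCP-penalized clustering
objective `Q(γ) = (1/2)‖y − Wγ‖₂² + Σ_{i<j} ρ_MCP(‖γ_i − γ_j‖₂; λ, θ)` is convex. -/
theorem mcp_objective_globally_convex
    (n T p : ℕ) (hn : 0 < n) (hT : 0 < T) (hp : 0 < p)
    (y : Fin n × Fin T → ℝ)
    (W : Matrix (Fin n × Fin T) (Fin n × Fin p) ℝ)
    (lam th : ℝ) (hlam : 0 < lam) (hth : 0 < th)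
    (Q : (Fin n × Fin p → ℝ) → ℝ)
    (hQ : Q = fun γ =>
      (1 / 2) * ∑ it, (y it - W.mulVec γ it) ^ 2 +
        ∑ ij ∈ Finset.univ.filter (fun ij : Fin n × Fin n => ij.1 < ij.2),
          mcp lam th (norm2 (fun a => γ (ij.1, a) - γ (ij.2, a))))
    (hconv : (n : ℝ) ≤ th * lambdaMin (Wᵀ * W)) :
    ConvexOn ℝ Set.univ Q :=
  mcp_objective_globally_convex_general n T p y W lam th hlam hth Q hQ hconv
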